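/- arXiv:2407.00398 — 4 statements merged into one kernel-verified Lean document; each statement's English description precedes it below -/
import Mathlib

section
/- For all φ, ψ ∈ L²(ℝ^d; ℂ) it holds that ((‖φ‖²_{L²} + ‖ψ‖²_{L²})/2) · inf_{λ∈ℂ, |λ|=1} ‖ψ − λφ‖²_{L²} ≤ ∬_{ℝ^d×ℝ^d} |ψ(x)·conj(ψ(y)) − φ(x)·conj(φ(y))|² dx dy. -/
/-!
Write `A = ‖φ‖²`, `B = ‖ψ‖²` and `c = ∫ ψ φ̄`. Expanding the squares gives
`∬ |ψ(x) ψ̄(y) − φ(x) φ̄(y)|² = A² + B² − 2|c|²` and `‖ψ − λφ‖² = A + B − 2 Re(λ̄ c)`, which for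
`λ` the phase of `c` equals `J = A + B − 2|c| ≥ 0`. The theorem then follows from the identity
`A² + B² − 2|c|² − (A + B)/2 · J = (A − B)²/2 + |c| J`.
-/

open MeasureTheory ComplexConjugate

lemma Complex.exists_norm_eq_one_conj_mul_eq_norm (c : ℂ) : ∃ l : ℂ, ‖l‖ = 1 ∧ conj l * c = ‖c‖ := by
  have hl : ‖Complex.exp (c.arg * Complex.I)‖ = 1 := Complex.norm_exp_ofReal_mul_I _
  refine ⟨_, hl, ?_⟩
  calc conj (Complex.exp (c.arg * Complex.I)) * c
      = conj (Complex.exp (c.arg * Complex.I)) * (‖c‖ * Complex.exp (c.arg * Complex.I)) := by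
        rw [Complex.norm_mul_exp_arg_mul_I]
    _ = ‖c‖ := by rw [mul_left_comm, Complex.conj_mul', hl]; simp

namespace MeasureTheory

variable {α : Type*} [MeasurableSpace α] {μ : Measure α}

lemma MemLp.integrable_norm_sq {E : Type*} [NormedAddCommGroup E] {f : α → E}
    (hf : MemLp f 2 μ) : Integrable (fun x => ‖f x‖ ^ 2) μ :=
  (memLp_two_iff_integrable_sq_norm hf.1).1 hf

lemma MemLp.integrable_mul_conj {𝕜 : Type*} [RCLike 𝕜] {f g : α → 𝕜}
    (hf : MemLp f 2 μ) (hg : MemLp g 2 μ) : Integrable (fun x => f x * conj (g x)) μ :=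
  hf.integrable_mul hg.star

lemma integral_mul_add_mul_sub_two_re {F G : α → ℝ} {h : α → ℂ} (hF : Integrable F μ)
    (hG : Integrable G μ) (hh : Integrable h μ) (p q : ℝ) (k : ℂ) :
    ∫ x, (p * F x + q * G x - 2 * (k * h x).re) ∂μ =
      p * ∫ x, F x ∂μ + q * ∫ x, G x ∂μ - 2 * (k * ∫ x, h x ∂μ).re := by
  have hre : ∫ x, (k * h x).re ∂μ = (k * ∫ x, h x ∂μ).re := by
    rw [← integral_const_mul]
    exact integral_re (hh.const_mul k)
  have hFG : Integrable (fun x => p * F x + q * G x) μ := (hF.const_mul p).add (hG.const_mul q)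
  have hkh : Integrable (fun x => 2 * (k * h x).re) μ := (hh.const_mul k).re.const_mul 2
  rw [integral_sub hFG hkh,
    integral_add (hF.const_mul p) (hG.const_mul q), integral_const_mul, integral_const_mul,
    integral_const_mul, hre]

variable {f g : α → ℂ}

theorem integral_norm_sq_mul_sub_mul (hf : MemLp f 2 μ) (hg : MemLp g 2 μ) (a b : ℂ) :
    ∫ x, ‖a * f x - b * g x‖ ^ 2 ∂μ =
      ‖a‖ ^ 2 * ∫ x, ‖f x‖ ^ 2 ∂μ + ‖b‖ ^ 2 * ∫ x, ‖g x‖ ^ 2 ∂μ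
        - 2 * (a * conj b * ∫ x, f x * conj (g x) ∂μ).re := by
  have hpt : ∀ x, ‖a * f x - b * g x‖ ^ 2 =
      ‖a‖ ^ 2 * ‖f x‖ ^ 2 + ‖b‖ ^ 2 * ‖g x‖ ^ 2 - 2 * (a * conj b * (f x * conj (g x))).re := by
    intro x
    simp only [Complex.sq_norm, Complex.normSq_sub, map_mul]
    ring_nf
  simp_rw [hpt]
  exact integral_mul_add_mul_sub_two_re hf.integrable_norm_sq hg.integrable_norm_sq
    (hf.integrable_mul_conj hg) _ _ _

theorem exists_norm_eq_one_integral_norm_sq_sub_mul (hf : MemLp f 2 μ) (hg : MemLp g 2 μ) :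
    ∃ l : ℂ, ‖l‖ = 1 ∧ ∫ x, ‖g x - l * f x‖ ^ 2 ∂μ =
      ∫ x, ‖g x‖ ^ 2 ∂μ + ∫ x, ‖f x‖ ^ 2 ∂μ - 2 * ‖∫ x, g x * conj (f x) ∂μ‖ := by
  obtain ⟨l, hl, hlc⟩ := Complex.exists_norm_eq_one_conj_mul_eq_norm (∫ x, g x * conj (f x) ∂μ)
  refine ⟨l, hl, ?_⟩
  have h := integral_norm_sq_mul_sub_mul hg hf 1 l
  simp only [one_mul, norm_one, one_pow, hl] at h
  rw [h, hlc, Complex.ofReal_re]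

theorem integral_integral_norm_sq_mul_conj_sub_mul_conj (hf : MemLp f 2 μ) (hg : MemLp g 2 μ) :
    ∫ x, ∫ y, ‖g x * conj (g y) - f x * conj (f y)‖ ^ 2 ∂μ ∂μ =
      (∫ x, ‖g x‖ ^ 2 ∂μ) ^ 2 + (∫ x, ‖f x‖ ^ 2 ∂μ) ^ 2
        - 2 * ‖∫ x, g x * conj (f x) ∂μ‖ ^ 2 := by
  have hinner : ∀ x, ∫ y, ‖g x * conj (g y) - f x * conj (f y)‖ ^ 2 ∂μ =
      (∫ y, ‖g y‖ ^ 2 ∂μ) * ‖g x‖ ^ 2 + (∫ y, ‖f y‖ ^ 2 ∂μ) * ‖f x‖ ^ 2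
        - 2 * (conj (∫ y, g y * conj (f y) ∂μ) * (g x * conj (f x))).re := by
    intro x
    have hconj : ∀ y, ‖g x * conj (g y) - f x * conj (f y)‖ =
        ‖conj (g x) * g y - conj (f x) * f y‖ := fun y => by
      rw [← Complex.norm_conj]; simp
    simp_rw [hconj]
    rw [integral_norm_sq_mul_sub_mul hg hf, ← Complex.conj_re]
    simp only [Complex.norm_conj, map_mul, Complex.conj_conj]
    ring_nf
  simp_rw [hinner]
  rw [integral_mul_add_mul_sub_two_re hg.integrable_norm_sq hf.integrable_norm_sq
    (hg.integrable_mul_conj hf), Complex.conj_mul',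
    ← Complex.ofReal_pow, Complex.ofReal_re]
  ring

end MeasureTheory

lemma mul_le_sq_add_sq_sub_two_mul_sq {A B t I : ℝ} (ht : 0 ≤ t) (hJ : 0 ≤ B + A - 2 * t)
    (hI : I ≤ B + A - 2 * t) : (A + B) / 2 * I ≤ B ^ 2 + A ^ 2 - 2 * t ^ 2 := by
  nlinarith [sq_nonneg (A - B), mul_nonneg ht hJ]

/-- For all `φ, ψ ∈ L²(ℝ^d; ℂ)`,
`((‖φ‖² + ‖ψ‖²)/2) · inf_{|λ|=1} ‖ψ − λφ‖² ≤ ‖ψ ⊗ conj ψ − φ ⊗ conj φ‖²_{L²(ℝ^{2d})}`. -/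
theorem lifted_lower_bound (d : ℕ) (φ ψ : EuclideanSpace ℝ (Fin d) → ℂ)
    (hφ : MemLp φ 2 volume) (hψ : MemLp ψ 2 volume) :
    ((∫ x, ‖φ x‖ ^ 2) + (∫ x, ‖ψ x‖ ^ 2)) / 2 *
      (⨅ lam : {c : ℂ // ‖c‖ = 1}, ∫ x, ‖ψ x - (lam : ℂ) * φ x‖ ^ 2) ≤
    ∫ x, ∫ y, ‖ψ x * (starRingEnd ℂ) (ψ y) - φ x * (starRingEnd ℂ) (φ y)‖ ^ 2 := by
  obtain ⟨l, hl, hval⟩ := exists_norm_eq_one_integral_norm_sq_sub_mul hφ hψ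
  have hinf : (⨅ lam : {c : ℂ // ‖c‖ = 1}, ∫ x, ‖ψ x - (lam : ℂ) * φ x‖ ^ 2) ≤
      ∫ x, ‖ψ x - l * φ x‖ ^ 2 :=
    ciInf_le ⟨0, by rintro _ ⟨lam, rfl⟩; positivity⟩ (⟨l, hl⟩ : {c : ℂ // ‖c‖ = 1})
  have hnonneg : 0 ≤ ∫ x, ‖ψ x - l * φ x‖ ^ 2 := by positivity
  rw [integral_integral_norm_sq_mul_conj_sub_mul_conj hφ hψ]
  rw [hval] at hinf hnonneg
  exact mul_le_sq_add_sq_sub_two_mul_sq (norm_nonneg _) hnonneg hinf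
end

section
/- Let χ : ℝ^d → [0,∞) be a bounded measurable weight and let F, H ∈ L⁴(ℝ^d). Then inf_{λ∈ℂ, |λ|=1} ‖H − λF‖_{ℒ(χ)} ≤ 2 · inf_{c∈ℂ} ‖H − cF‖_{ℒ(χ)} + ‖|H| − |F|‖_{ℒ(χ)}. -/
open MeasureTheory

/-- The weighted mixed norm `‖F‖_{ℒ(χ)} = (∫ (∫_{B₁(τ)} |F|²)² χ(τ) dτ)^{1/4}`. -/
noncomputable def LNorm {d : ℕ} (χ : EuclideanSpace ℝ (Fin d) → ℝ)
    (F : EuclideanSpace ℝ (Fin d) → ℂ) : ℝ :=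
  (∫ τ, (∫ x in Metric.ball τ 1, ‖F x‖ ^ 2) ^ 2 * χ τ) ^ ((1 : ℝ) / 4)

/-!
Given `c ∈ ℂ`, take the unit `u = c / |c|` (`u = 1` if `c = 0`). Pointwise,
`|H - uF| ≤ |H - cF| + ||c| - 1| |F|` and `||c| - 1| |F| = ||cF| - |F|| ≤ |H - cF| + ||H| - |F||`,
so `|H - uF| ≤ 2 |H - cF| + ||H| - |F||`.

The `ℒ(χ)`-norm is the `L⁴(χ dτ)`-norm of `τ ↦ ‖F‖_{L²(B₁(τ))}`, hence monotone and, by Minkowski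
applied twice, subadditive; this turns the pointwise bound into the theorem. The real-valued
`LNorm`, a Bochner integral and hence `0` when the integrand is not integrable, agrees with this
`ℝ≥0∞`-valued norm only where the latter is finite. That holds on `L⁴` for bounded `χ`: Hölder on
each ball and Fubini give `‖F‖_{ℒ(χ)} ≤ (sup χ)^{1/4} |B₁|^{1/2} ‖F‖₄`.
-/

open Metric ENNReal

theorem norm_sub_smul_le_of_norm_sub_eq {𝕜 V : Type*} [NormedField 𝕜]
    [SeminormedAddCommGroup V] [NormedSpace 𝕜 V] {c u : 𝕜} (hu : ‖c - u‖ = |‖c‖ - 1|)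
    (h f : V) : ‖h - u • f‖ ≤ 2 * ‖h - c • f‖ + |‖h‖ - ‖f‖| := by
  have hcu : ‖(c - u) • f‖ = |‖c • f‖ - ‖f‖| := by
    rw [norm_smul, hu, norm_smul, ← abs_norm f, ← abs_mul, sub_mul, one_mul, abs_norm]
  have h₁ : ‖h - u • f‖ ≤ ‖h - c • f‖ + ‖(c - u) • f‖ := by
    simpa only [sub_smul, sub_add_sub_cancel] using norm_add_le (h - c • f) ((c - u) • f)
  have h₂ : |‖c • f‖ - ‖h‖| ≤ ‖h - c • f‖ := by
    rw [norm_sub_rev]; exact abs_norm_sub_norm_le _ _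
  have h₃ := abs_sub_le ‖c • f‖ ‖h‖ ‖f‖
  linarith

theorem Complex.norm_sub_exp_arg_mul_I (c : ℂ) :
    ‖c - Complex.exp (c.arg * Complex.I)‖ = |‖c‖ - 1| := by
  have hc : c - Complex.exp (c.arg * Complex.I)
      = ((‖c‖ - 1 : ℝ) : ℂ) * Complex.exp (c.arg * Complex.I) := by
    rw [Complex.ofReal_sub, sub_mul, c.norm_mul_exp_arg_mul_I, Complex.ofReal_one, one_mul]
  rw [hc, norm_mul, Complex.norm_exp_ofReal_mul_I, mul_one, Complex.norm_real, Real.norm_eq_abs]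

section BallMixedNorm

variable {α : Type*} [PseudoMetricSpace α] [MeasurableSpace α]

noncomputable def ballMixedNorm {ε : Type*} [ENorm ε] (μ : Measure α) (w : α → ℝ≥0∞)
    (f : α → ε) : ℝ≥0∞ :=
  eLpNorm (fun τ => eLpNorm f 2 (μ.restrict (ball τ 1))) 4 (μ.withDensity w)

variable {μ : Measure α} {w : α → ℝ≥0∞}

theorem ballMixedNorm_mono {ε ε' : Type*} [ENorm ε] [ENorm ε'] {f : α → ε} {g : α → ε'}
    (h : ∀ x, ‖f x‖ₑ ≤ ‖g x‖ₑ) : ballMixedNorm μ w f ≤ ballMixedNorm μ w g :=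
  eLpNorm_mono_enorm fun _ => eLpNorm_mono_enorm h

theorem ballMixedNorm_congr_enorm {ε ε' : Type*} [ENorm ε] [ENorm ε'] {f : α → ε}
    {g : α → ε'} (h : ∀ x, ‖f x‖ₑ = ‖g x‖ₑ) : ballMixedNorm μ w f = ballMixedNorm μ w g :=
  le_antisymm (ballMixedNorm_mono fun x => (h x).le) (ballMixedNorm_mono fun x => (h x).ge)

variable [OpensMeasurableSpace α] [SecondCountableTopology α]

theorem measurable_indicator_ball {f : α → ℝ≥0∞} (hf : Measurable f) (r : ℝ) :
    Measurable fun p : α × α => (ball p.1 r).indicator f p.2 :=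
  (hf.comp measurable_snd).indicator
    (measurableSet_lt (continuous_snd.dist continuous_fst).measurable measurable_const)

theorem measurable_setLIntegral_ball [SFinite μ] {f : α → ℝ≥0∞} (hf : AEMeasurable f μ)
    (r : ℝ) : Measurable fun τ => ∫⁻ x in ball τ r, f x ∂μ := by
  have hmk : ∀ τ, ∫⁻ x in ball τ r, f x ∂μ = ∫⁻ x in ball τ r, hf.mk f x ∂μ :=
    fun τ => lintegral_congr_ae (ae_restrict_of_ae hf.ae_eq_mk)
  simp_rw [hmk, ← lintegral_indicator measurableSet_ball]
  exact (measurable_indicator_ball hf.measurable_mk r).lintegral_prod_right'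

theorem measurable_eLpNorm_restrict_ball [SFinite μ] {ε : Type*} [TopologicalSpace ε]
    [ContinuousENorm ε] {f : α → ε} (hf : AEStronglyMeasurable f μ) {p : ℝ≥0∞} (hp : p ≠ ∞)
    (r : ℝ) :
    Measurable fun τ => eLpNorm f p (μ.restrict (ball τ r)) := by
  rcases eq_or_ne p 0 with rfl | hp₀
  · simp
  simp_rw [eLpNorm_eq_lintegral_rpow_enorm_toReal hp₀ hp]
  exact (measurable_setLIntegral_ball (hf.enorm.pow_const _) r).pow_const _

theorem ballMixedNorm_add_le [SFinite μ] {ε : Type*} [TopologicalSpace ε]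
    [ESeminormedAddMonoid ε] {f g : α → ε} (hf : AEStronglyMeasurable f μ)
    (hg : AEStronglyMeasurable g μ) :
    ballMixedNorm μ w (f + g) ≤ ballMixedNorm μ w f + ballMixedNorm μ w g :=
  (eLpNorm_mono_enorm fun τ => eLpNorm_add_le hf.restrict hg.restrict one_le_two).trans
    (eLpNorm_add_le (measurable_eLpNorm_restrict_ball hf ofNat_ne_top 1).aestronglyMeasurable
      (measurable_eLpNorm_restrict_ball hg ofNat_ne_top 1).aestronglyMeasurable (by norm_num))

theorem ballMixedNorm_sub_smul_le [SFinite μ] {𝕜 V : Type*} [NormedField 𝕜]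
    [SeminormedAddCommGroup V] [NormedSpace 𝕜 V] {F H : α → V} (hF : AEStronglyMeasurable F μ)
    (hH : AEStronglyMeasurable H μ) {c u : 𝕜} (hu : ‖c - u‖ = |‖c‖ - 1|) :
    ballMixedNorm μ w (fun x => H x - u • F x) ≤
      2 * ballMixedNorm μ w (fun x => H x - c • F x) +
        ballMixedNorm μ w (fun x => ‖H x‖ - ‖F x‖) := by
  set a : α → ℝ≥0∞ := fun x => ‖H x - c • F x‖ₑ
  set b : α → ℝ≥0∞ := fun x => ‖‖H x‖ - ‖F x‖‖ₑ
  have ha : AEStronglyMeasurable a μ := (hH.sub (hF.const_smul c)).enorm.aestronglyMeasurable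
  have hb : AEStronglyMeasurable b μ := (hH.norm.sub hF.norm).enorm.aestronglyMeasurable
  have hpointwise : ∀ x, ‖H x - u • F x‖ₑ ≤ ‖(a + a + b) x‖ₑ := by
    intro x
    simp only [a, b, enorm_eq_self, Pi.add_apply, ← ofReal_norm, Real.norm_eq_abs]
    rw [← ofReal_add (norm_nonneg _) (norm_nonneg _),
      ← ofReal_add (by positivity) (abs_nonneg _)]
    exact ofReal_le_ofReal (by linarith [norm_sub_smul_le_of_norm_sub_eq hu (H x) (F x)])
  calc ballMixedNorm μ w (fun x => H x - u • F x)
      ≤ ballMixedNorm μ w (a + a + b) := ballMixedNorm_mono hpointwise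
    _ ≤ ballMixedNorm μ w a + ballMixedNorm μ w a + ballMixedNorm μ w b :=
        (ballMixedNorm_add_le (ha.add ha) hb).trans (by gcongr; exact ballMixedNorm_add_le ha ha)
    _ = 2 * ballMixedNorm μ w (fun x => H x - c • F x) +
        ballMixedNorm μ w (fun x => ‖H x‖ - ‖F x‖) := by
        rw [two_mul, ballMixedNorm_congr_enorm (f := a) (g := fun x => H x - c • F x)
          fun _ => enorm_eq_self _, ballMixedNorm_congr_enorm (f := b)
          (g := fun x => ‖H x‖ - ‖F x‖) fun _ => enorm_eq_self _]

end BallMixedNorm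

section AddHaar

variable {E V : Type*} [NormedAddCommGroup E] [NormedSpace ℝ E] [FiniteDimensional ℝ E]
  [MeasurableSpace E] [BorelSpace E] {μ : Measure E} [μ.IsAddHaarMeasure]

theorem lintegral_setLIntegral_ball {f : E → ℝ≥0∞} (hf : AEMeasurable f μ) (r : ℝ) :
    ∫⁻ τ, ∫⁻ x in ball τ r, f x ∂μ ∂μ = μ (ball 0 r) * ∫⁻ x, f x ∂μ := by
  set g := hf.mk f
  have hmk : ∀ τ, ∫⁻ x in ball τ r, f x ∂μ = ∫⁻ x in ball τ r, g x ∂μ :=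
    fun τ => lintegral_congr_ae (ae_restrict_of_ae hf.ae_eq_mk)
  have hswap : ∀ x, ∫⁻ τ, (ball τ r).indicator g x ∂μ = μ (ball 0 r) * g x := by
    intro x
    have hball : ∀ τ, (ball τ r).indicator g x = (ball x r).indicator (fun _ => g x) τ :=
      fun τ => by simp only [Set.indicator, mem_ball]; rw [dist_comm]
    rw [lintegral_congr hball, lintegral_indicator_const measurableSet_ball,
      Measure.addHaar_ball_center, mul_comm]
  simp_rw [hmk, ← lintegral_indicator measurableSet_ball]
  rw [lintegral_lintegral_swap (measurable_indicator_ball hf.measurable_mk r).aemeasurable,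
    lintegral_congr hswap, lintegral_const_mul _ hf.measurable_mk,
    lintegral_congr_ae hf.ae_eq_mk]

variable [SeminormedAddCommGroup V] {w : E → ℝ≥0∞}

theorem ballMixedNorm_le {C : ℝ≥0∞} (hw_meas : Measurable w) (hw : ∀ τ, w τ ≤ C) {G : E → V}
    (hG : AEStronglyMeasurable G μ) :
    ballMixedNorm μ w G ≤ C ^ (4⁻¹ : ℝ) * μ (ball 0 1) ^ (2⁻¹ : ℝ) * eLpNorm G 4 μ := by
  set B := μ (ball 0 1)
  set J : E → ℝ≥0∞ := fun τ => ∫⁻ x in ball τ 1, ‖G x‖ₑ ^ (4 : ℝ) ∂μ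
  have hlocal : ∀ τ, eLpNorm G 2 (μ.restrict (ball τ 1)) ^ (4 : ℝ) ≤ B * J τ := by
    intro τ
    have hpow : eLpNorm G 4 (μ.restrict (ball τ 1)) ^ (4 : ℝ) = J τ := by
      simpa [J] using eLpNorm_nnreal_pow_eq_lintegral (μ := μ.restrict (ball τ 1)) (f := G)
        (p := 4) (by norm_num)
    have hhölder := eLpNorm_le_eLpNorm_mul_rpow_measure_univ (μ := μ.restrict (ball τ 1))
      (by norm_num : (2 : ℝ≥0∞) ≤ 4) hG.restrict
    rw [Measure.restrict_apply_univ, Measure.addHaar_ball_center] at hhölder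
    norm_num at hhölder
    calc eLpNorm G 2 (μ.restrict (ball τ 1)) ^ (4 : ℝ)
        ≤ (eLpNorm G 4 (μ.restrict (ball τ 1)) * B ^ (4⁻¹ : ℝ)) ^ (4 : ℝ) := by
          gcongr; simpa only [one_div] using hhölder
      _ = B * J τ := by
        rw [mul_rpow_of_nonneg _ _ (by norm_num), ← rpow_mul,
          inv_mul_cancel₀ (by norm_num : (4 : ℝ) ≠ 0), rpow_one, hpow, mul_comm]
  have hint : ∫⁻ τ, eLpNorm G 2 (μ.restrict (ball τ 1)) ^ (4 : ℝ) ∂μ.withDensity w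
      ≤ C * B ^ (2 : ℝ) * eLpNorm G 4 μ ^ (4 : ℝ) := by
    have hJ : AEMeasurable (fun x => ‖G x‖ₑ ^ (4 : ℝ)) μ := hG.enorm.pow_const _
    have hpow : eLpNorm G 4 μ ^ (4 : ℝ) = ∫⁻ x, ‖G x‖ₑ ^ (4 : ℝ) ∂μ := by
      simpa using eLpNorm_nnreal_pow_eq_lintegral (μ := μ) (f := G) (p := 4) (by norm_num)
    calc ∫⁻ τ, eLpNorm G 2 (μ.restrict (ball τ 1)) ^ (4 : ℝ) ∂μ.withDensity w
        ≤ ∫⁻ τ, w τ * eLpNorm G 2 (μ.restrict (ball τ 1)) ^ (4 : ℝ) ∂μ :=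
          lintegral_withDensity_le_lintegral_mul μ hw_meas _
      _ ≤ ∫⁻ τ, C * B * J τ ∂μ :=
          lintegral_mono fun τ =>
            (mul_le_mul' (hw τ) (hlocal τ)).trans_eq (mul_assoc _ _ _).symm
      _ = C * B ^ (2 : ℝ) * eLpNorm G 4 μ ^ (4 : ℝ) := by
          rw [lintegral_const_mul _ (measurable_setLIntegral_ball hJ 1),
            lintegral_setLIntegral_ball hJ, hpow, rpow_two]
          ring
  calc ballMixedNorm μ w G
      = (∫⁻ τ, eLpNorm G 2 (μ.restrict (ball τ 1)) ^ (4 : ℝ) ∂μ.withDensity w) ^ (4⁻¹ : ℝ) := by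
        rw [ballMixedNorm, eLpNorm_eq_lintegral_rpow_enorm_toReal (by norm_num) (by norm_num)]
        norm_num
    _ ≤ (C * B ^ (2 : ℝ) * eLpNorm G 4 μ ^ (4 : ℝ)) ^ (4⁻¹ : ℝ) := by gcongr
    _ = C ^ (4⁻¹ : ℝ) * B ^ (2⁻¹ : ℝ) * eLpNorm G 4 μ := by
        rw [mul_rpow_of_nonneg _ _ (by norm_num), mul_rpow_of_nonneg _ _ (by norm_num),
          ← rpow_mul, ← rpow_mul]
        norm_num

theorem ballMixedNorm_lt_top {C : ℝ≥0∞} (hw_meas : Measurable w) (hw : ∀ τ, w τ ≤ C)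
    (hC : C ≠ ∞) {G : E → V} (hG : MemLp G 4 μ) : ballMixedNorm μ w G < ∞ :=
  (ballMixedNorm_le hw_meas hw hG.1).trans_lt <|
    mul_lt_top (mul_lt_top (rpow_lt_top_of_nonneg (by norm_num) hC)
      (rpow_lt_top_of_nonneg (by norm_num) measure_ball_lt_top.ne)) hG.2

end AddHaar

section Euclidean

variable {d : ℕ} {χ : EuclideanSpace ℝ (Fin d) → ℝ}

theorem LNorm_nonneg (hχ0 : ∀ τ, 0 ≤ χ τ) (G : EuclideanSpace ℝ (Fin d) → ℂ) : 0 ≤ LNorm χ G :=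
  Real.rpow_nonneg (integral_nonneg fun τ => mul_nonneg (sq_nonneg _) (hχ0 τ)) _

theorem LNorm_eq_toReal_ballMixedNorm (hχ : Measurable χ) (hχ0 : ∀ τ, 0 ≤ χ τ)
    {G : EuclideanSpace ℝ (Fin d) → ℂ} (hG : AEStronglyMeasurable G volume)
    (hloc : ∀ τ, eLpNorm G 2 (volume.restrict (ball τ 1)) ≠ ∞) :
    LNorm χ G = (ballMixedNorm volume (fun τ => ENNReal.ofReal (χ τ)) G).toReal := by
  set I := fun τ => eLpNorm G 2 (volume.restrict (ball τ 1))
  have hI : Measurable I := measurable_eLpNorm_restrict_ball hG ofNat_ne_top 1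
  have hinner : ∀ τ, ∫ x in ball τ 1, ‖G x‖ ^ 2 = (I τ ^ 2).toReal := by
    intro τ
    have hpow : I τ ^ 2 = ∫⁻ x in ball τ 1, ‖G x‖ₑ ^ 2 := by
      simpa [I] using eLpNorm_nnreal_pow_eq_lintegral (μ := volume.restrict (ball τ 1))
        (f := G) (p := 2) (by norm_num)
    rw [integral_eq_lintegral_of_nonneg_ae (f := fun x => ‖G x‖ ^ 2)
      (ae_of_all _ fun x => sq_nonneg ‖G x‖) (by fun_prop), hpow]
    simp_rw [ofReal_pow (norm_nonneg _), ofReal_norm]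
  have houter : ∀ τ, (∫ x in ball τ 1, ‖G x‖ ^ 2) ^ 2 * χ τ
      = (ENNReal.ofReal (χ τ) * I τ ^ 4).toReal := by
    intro τ
    rw [hinner, toReal_mul, toReal_ofReal (hχ0 τ), ← toReal_pow, ← pow_mul, mul_comm]
  have hfin : ∀ τ, ENNReal.ofReal (χ τ) * I τ ^ 4 < ∞ :=
    fun τ => mul_lt_top ofReal_lt_top (pow_lt_top (hloc τ).lt_top)
  have hmixed : ballMixedNorm volume (fun τ => ENNReal.ofReal (χ τ)) G
      = (∫⁻ τ, ENNReal.ofReal (χ τ) * I τ ^ 4) ^ (1 / 4 : ℝ) := by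
    rw [ballMixedNorm, eLpNorm_eq_lintegral_rpow_enorm_toReal (by norm_num) (by norm_num)]
    simp only [enorm_eq_self, toReal_ofNat, rpow_ofNat]
    rw [lintegral_withDensity_eq_lintegral_mul _ hχ.ennreal_ofReal (hI.pow_const 4)]
    rfl
  rw [LNorm, hmixed, ← toReal_rpow]
  simp_rw [houter]
  rw [integral_toReal (by fun_prop) (ae_of_all _ hfin)]

theorem LNorm_sub_mul_le (hχ : Measurable χ) (hχ0 : ∀ τ, 0 ≤ χ τ) {M : ℝ}
    (hM : ∀ τ, χ τ ≤ M) {F H : EuclideanSpace ℝ (Fin d) → ℂ} (hF : MemLp F 4 volume)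
    (hH : MemLp H 4 volume) {c u : ℂ} (hu : ‖c - u‖ = |‖c‖ - 1|) :
    LNorm χ (fun x => H x - u * F x) ≤
      2 * LNorm χ (fun x => H x - c * F x) + LNorm χ (fun x => ((‖H x‖ - ‖F x‖ : ℝ) : ℂ)) := by
  set w := fun τ => ENNReal.ofReal (χ τ)
  have hfin : ∀ G : EuclideanSpace ℝ (Fin d) → ℂ, MemLp G 4 volume →
      ballMixedNorm volume w G ≠ ∞ := fun G hG =>
    (ballMixedNorm_lt_top hχ.ennreal_ofReal (fun τ => ofReal_le_ofReal (hM τ)) ofReal_ne_top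
      hG).ne
  have hbridge : ∀ G : EuclideanSpace ℝ (Fin d) → ℂ, MemLp G 4 volume →
      LNorm χ G = (ballMixedNorm volume w G).toReal := by
    intro G hG
    refine LNorm_eq_toReal_ballMixedNorm hχ hχ0 hG.1 fun τ => ?_
    have : Fact (volume (ball τ 1) < ∞) := ⟨measure_ball_lt_top⟩
    exact ((hG.restrict _).mono_exponent (by norm_num)).2.ne
  have huF : MemLp (fun x => H x - u * F x) 4 volume := hH.sub (hF.const_mul u)
  have hcF : MemLp (fun x => H x - c * F x) 4 volume := hH.sub (hF.const_mul c)
  have hD : MemLp (fun x => ((‖H x‖ - ‖F x‖ : ℝ) : ℂ)) 4 volume := (hH.norm.sub hF.norm).ofReal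
  have hDreal : ballMixedNorm volume w (fun x => ((‖H x‖ - ‖F x‖ : ℝ) : ℂ)) =
      ballMixedNorm volume w (fun x => ‖H x‖ - ‖F x‖) :=
    ballMixedNorm_congr_enorm fun x => by simp only [← ofReal_norm, Complex.norm_real]
  have hkey := ballMixedNorm_sub_smul_le (μ := volume) (w := w) hF.1 hH.1 hu
  simp only [smul_eq_mul] at hkey
  have hcF_fin := mul_ne_top (ofNat_ne_top (n := 2)) (hfin _ hcF)
  have hD_fin := hfin _ hD
  rw [hDreal] at hD_fin
  rw [hbridge _ huF, hbridge _ hcF, hbridge _ hD, hDreal, ← toReal_ofNat 2, ← toReal_mul,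
    ← toReal_add hcF_fin hD_fin]
  exact toReal_mono (add_ne_top.2 ⟨hcF_fin, hD_fin⟩) hkey

end Euclidean

/-- For a bounded measurable weight `χ ≥ 0` and `F, H ∈ L⁴(ℝ^d)`:
`inf_{|λ|=1} ‖H−λF‖_{ℒ(χ)} ≤ 2 inf_{c∈ℂ} ‖H−cF‖_{ℒ(χ)} + ‖|H|−|F|‖_{ℒ(χ)}`. -/
theorem replace_constraint (d : ℕ)
    (χ : EuclideanSpace ℝ (Fin d) → ℝ) (hχmeas : Measurable χ)
    (hχ0 : ∀ τ, 0 ≤ χ τ) (hχbdd : ∃ M : ℝ, ∀ τ, χ τ ≤ M)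
    (F H : EuclideanSpace ℝ (Fin d) → ℂ)
    (hF : MemLp F 4 volume) (hH : MemLp H 4 volume) :
    (⨅ lam : {c : ℂ // ‖c‖ = 1}, LNorm χ (fun x => H x - (lam : ℂ) * F x)) ≤
      2 * (⨅ c : ℂ, LNorm χ (fun x => H x - c * F x)) +
        (∫ τ, (∫ x in Metric.ball τ 1, (‖H x‖ - ‖F x‖) ^ 2) ^ 2 * χ τ) ^ ((1 : ℝ) / 4) := by
  obtain ⟨M, hM⟩ := hχbdd
  set R := LNorm χ (fun x => ((‖H x‖ - ‖F x‖ : ℝ) : ℂ))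
  have hR : (∫ τ, (∫ x in Metric.ball τ 1, (‖H x‖ - ‖F x‖) ^ 2) ^ 2 * χ τ) ^ ((1 : ℝ) / 4) = R := by
    simp only [R, LNorm, Complex.norm_real, Real.norm_eq_abs, sq_abs]
  rw [hR]
  set m := ⨅ lam : {c : ℂ // ‖c‖ = 1}, LNorm χ (fun x => H x - (lam : ℂ) * F x)
  have hbdd : BddBelow (Set.range fun lam : {c : ℂ // ‖c‖ = 1} =>
      LNorm χ (fun x => H x - (lam : ℂ) * F x)) :=
    ⟨0, by rintro _ ⟨lam, rfl⟩; exact LNorm_nonneg hχ0 _⟩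
  have hc (c : ℂ) : m ≤ 2 * LNorm χ (fun x => H x - c * F x) + R :=
    (ciInf_le hbdd ⟨_, Complex.norm_exp_ofReal_mul_I c.arg⟩).trans
      (LNorm_sub_mul_le hχmeas hχ0 hM hF hH (Complex.norm_sub_exp_arg_mul_I c))
  have hinf : (m - R) / 2 ≤ ⨅ c : ℂ, LNorm χ (fun x => H x - c * F x) :=
    le_ciInf fun c => by linarith [hc c]
  linarith
end

section
/- The function φ₂ : ℝ → ℝ defined by φ₂(0) = 1 and φ₂(ξ) = πξ(1+ξ²)/sinh(πξ) for ξ ≠ 0 is positive and log-concave on ℝ, i.e., log ∘ φ₂ is concave on ℝ. (This function equals ξ ↦ |Γ(2 − iξ)|², where Γ is the complex Gamma function.) -/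
/-- The function `φ₂(ξ) = πξ(1+ξ²)/sinh(πξ)` for `ξ ≠ 0`, with `φ₂(0) = 1`
(its limit value); it equals `ξ ↦ |Γ(2 − iξ)|²`. -/
noncomputable def phiTwo (ξ : ℝ) : ℝ :=
  if ξ = 0 then 1 else Real.pi * ξ * (1 + ξ ^ 2) / Real.sinh (Real.pi * ξ)

/-! The key inequality is `sinh u ≥ u + u³/6`. Writing `φ₂(ξ) = (1 + ξ²) / S(πξ)` with
`S = dslope sinh 0` (so `S u = sinh u / u` and `S 0 = 1`), it gives
`S(πξ) ≥ 1 + π²ξ²/6 ≥ 1 + ξ²`, hence `0 < φ₂ ≤ φ₂(0) = 1`. On `(0, ∞)` it gives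
`(log φ₂)'' = π² / sinh²(πξ) − (1 + 3ξ⁴) / (ξ²(1 + ξ²)²) ≤ 0`.
So `log φ₂` is even, concave on `[0, ∞)` and maximal at `0`; such a function is antitone
in `|ξ|`, and `|aξ + bη| ≤ a|ξ| + b|η|` makes it concave on all of `ℝ`. -/

open Real Set

section ConcaveOn

variable {𝕜 β : Type*} [Field 𝕜] [LinearOrder 𝕜] [IsStrictOrderedRing 𝕜]
  [AddCommMonoid β] [LinearOrder β] [IsOrderedCancelAddMonoid β] [Module 𝕜 β]
  [PosSMulStrictMono 𝕜 β] {f : 𝕜 → β}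

theorem ConcaveOn.antitoneOn_Ici_of_isMaxOn {a : 𝕜} (hf : ConcaveOn 𝕜 (Ici a) f)
    (hmax : IsMaxOn f (Ici a) a) : AntitoneOn f (Ici a) := by
  intro y hy z hz hyz
  rcases (mem_Ici.1 hy).eq_or_lt with rfl | hay
  · exact isMaxOn_iff.1 hmax z hz
  · exact hf.right_le_of_le_left'' self_mem_Ici hz hay hyz (isMaxOn_iff.1 hmax y hy)

theorem ConcaveOn.concaveOn_univ_of_even (hf : ConcaveOn 𝕜 (Ici 0) f)
    (heven : ∀ x, f (-x) = f x) (hmax : IsMaxOn f univ 0) : ConcaveOn 𝕜 univ f := by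
  have habs (x : 𝕜) : f |x| = f x := by
    rcases abs_choice x with h | h <;> rw [h]
    exact heven x
  have hanti := hf.antitoneOn_Ici_of_isMaxOn (hmax.on_subset (subset_univ _))
  refine ⟨convex_univ, fun x _ y _ a b ha hb hab => ?_⟩
  have hmem : a • |x| + b • |y| ∈ Ici 0 := hf.1 (abs_nonneg x) (abs_nonneg y) ha hb hab
  have htri : |a • x + b • y| ≤ a • |x| + b • |y| := by
    simpa only [smul_eq_mul, abs_mul, abs_of_nonneg ha, abs_of_nonneg hb] using
      abs_add_le (a • x) (b • y)
  calc a • f x + b • f y = a • f |x| + b • f |y| := by rw [habs, habs]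
    _ ≤ f (a • |x| + b • |y|) := hf.2 (abs_nonneg x) (abs_nonneg y) ha hb hab
    _ ≤ f |a • x + b • y| := hanti (abs_nonneg _) hmem htri
    _ = f (a • x + b • y) := habs _

end ConcaveOn

theorem Real.six_le_pi_sq : 6 ≤ π ^ 2 := by nlinarith [pi_gt_three]

theorem Real.add_pow_three_div_six_le_sinh {u : ℝ} (hu : 0 ≤ u) : u + u ^ 3 / 6 ≤ sinh u := by
  have := sum_le_hasSum (Finset.range 2) (fun n _ => by positivity) (hasSum_sinh u)
  norm_num [Finset.sum_range_succ, Nat.factorial] at this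
  linarith

theorem Real.one_add_sq_div_six_le_dslope_sinh (u : ℝ) : 1 + u ^ 2 / 6 ≤ dslope sinh 0 u := by
  rcases eq_or_ne u 0 with rfl | hu
  · simp [dslope_same, Real.deriv_sinh]
  have habs : sinh u / u = sinh |u| / |u| := by
    rcases abs_choice u with h | h <;> rw [h]
    rw [sinh_neg, neg_div_neg_eq]
  rw [dslope_of_ne _ hu, slope_def_field, sinh_zero, sub_zero, sub_zero, habs,
    le_div_iff₀ (abs_pos.2 hu)]
  have := add_pow_three_div_six_le_sinh (abs_nonneg u)
  have hsq : |u| ^ 3 = u ^ 2 * |u| := by rw [pow_succ, sq_abs]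
  linarith

theorem Real.dslope_sinh_pos (u : ℝ) : 0 < dslope sinh 0 u :=
  (by positivity : (0 : ℝ) < 1 + u ^ 2 / 6).trans_le (one_add_sq_div_six_le_dslope_sinh u)

theorem phiTwo_eq_div_dslope (ξ : ℝ) : phiTwo ξ = (1 + ξ ^ 2) / dslope sinh 0 (π * ξ) := by
  rcases eq_or_ne ξ 0 with rfl | hξ
  · simp [phiTwo, dslope_same, Real.deriv_sinh]
  have hπξ : π * ξ ≠ 0 := mul_ne_zero pi_ne_zero hξ
  rw [phiTwo, if_neg hξ, dslope_of_ne _ hπξ, slope_def_field, sinh_zero, sub_zero, sub_zero]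
  field_simp

theorem phiTwo_zero : phiTwo 0 = 1 := if_pos rfl

theorem phiTwo_pos (ξ : ℝ) : 0 < phiTwo ξ := by
  rw [phiTwo_eq_div_dslope]
  exact div_pos (by positivity) (dslope_sinh_pos _)

theorem phiTwo_le_one (ξ : ℝ) : phiTwo ξ ≤ 1 := by
  rw [phiTwo_eq_div_dslope, div_le_one (dslope_sinh_pos _)]
  calc 1 + ξ ^ 2 ≤ 1 + (π * ξ) ^ 2 / 6 := by
        nlinarith [mul_le_mul_of_nonneg_right six_le_pi_sq (sq_nonneg ξ)]
    _ ≤ _ := one_add_sq_div_six_le_dslope_sinh _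

theorem phiTwo_neg (ξ : ℝ) : phiTwo (-ξ) = phiTwo ξ := by
  rcases eq_or_ne ξ 0 with rfl | hξ
  · rw [neg_zero]
  rw [phiTwo, phiTwo, if_neg (neg_ne_zero.2 hξ), if_neg hξ, mul_neg, sinh_neg, neg_sq, neg_mul,
    neg_div_neg_eq]

theorem continuous_phiTwo : Continuous phiTwo := by
  have hs : Continuous (dslope sinh 0) := continuousOn_univ.1 <|
    (continuousOn_dslope Filter.univ_mem).2
      ⟨continuous_sinh.continuousOn, differentiable_sinh 0⟩
  rw [funext phiTwo_eq_div_dslope]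
  exact (by fun_prop : Continuous fun ξ : ℝ => 1 + ξ ^ 2).div (hs.comp (by fun_prop))
    fun ξ => (dslope_sinh_pos _).ne'

noncomputable def logPhiTwoDeriv (x : ℝ) : ℝ :=
  x⁻¹ + 2 * x / (1 + x ^ 2) - π * cosh (π * x) / sinh (π * x)

noncomputable def logPhiTwoDeriv2 (x : ℝ) : ℝ :=
  -(x ^ 2)⁻¹ + 2 * (1 - x ^ 2) / (1 + x ^ 2) ^ 2 + π ^ 2 / sinh (π * x) ^ 2

theorem log_phiTwo_of_pos {x : ℝ} (hx : 0 < x) :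
    log (phiTwo x) = log π + log x + log (1 + x ^ 2) - log (sinh (π * x)) := by
  have hs : 0 < sinh (π * x) := sinh_pos_iff.2 (by positivity)
  rw [phiTwo, if_neg hx.ne', log_div (by positivity) hs.ne',
    log_mul (by positivity) (by positivity), log_mul pi_ne_zero hx.ne']

theorem hasDerivAt_log_phiTwo {x : ℝ} (hx : 0 < x) :
    HasDerivAt (fun ξ => log (phiTwo ξ)) (logPhiTwoDeriv x) x := by
  have hs : 0 < sinh (π * x) := sinh_pos_iff.2 (by positivity)
  have hsq : HasDerivAt (fun y : ℝ => 1 + y ^ 2) (2 * x) x := by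
    simpa using (hasDerivAt_pow 2 x).const_add 1
  have hsinh : HasDerivAt (fun y => sinh (π * y)) (cosh (π * x) * π) x := by
    simpa using ((hasDerivAt_id' x).const_mul π).sinh
  have h := (((hasDerivAt_const x (log π)).add (hasDerivAt_log hx.ne')).add
    (hsq.log (by positivity))).sub (hsinh.log hs.ne')
  refine (h.congr_deriv (by unfold logPhiTwoDeriv; ring)).congr_of_eventuallyEq ?_
  filter_upwards [Ioi_mem_nhds hx] with y hy using log_phiTwo_of_pos hy

theorem hasDerivAt_logPhiTwoDeriv {x : ℝ} (hx : 0 < x) :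
    HasDerivAt logPhiTwoDeriv (logPhiTwoDeriv2 x) x := by
  have hs : 0 < sinh (π * x) := sinh_pos_iff.2 (by positivity)
  have hsq : HasDerivAt (fun y : ℝ => 1 + y ^ 2) (2 * x) x := by
    simpa using (hasDerivAt_pow 2 x).const_add 1
  have hrat := ((hasDerivAt_id' x).const_mul 2).div hsq (by positivity)
  have hcoth := (((hasDerivAt_id' x).const_mul π).cosh.const_mul π).div
    ((hasDerivAt_id' x).const_mul π).sinh hs.ne'
  refine ((hasDerivAt_inv hx.ne').add hrat).sub hcoth |>.congr_deriv ?_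
  unfold logPhiTwoDeriv2
  field_simp
  rw [cosh_sq]
  ring

theorem logPhiTwoDeriv2_nonpos {x : ℝ} (hx : 0 < x) : logPhiTwoDeriv2 x ≤ 0 := by
  have hs : 0 < sinh (π * x) := sinh_pos_iff.2 (by positivity)
  have hlow : π * x * (1 + x ^ 2) ≤ sinh (π * x) := by
    have : 0 ≤ π * x ^ 3 * (π ^ 2 - 6) :=
      mul_nonneg (by positivity) (sub_nonneg.2 six_le_pi_sq)
    nlinarith [add_pow_three_div_six_le_sinh (by positivity : 0 ≤ π * x)]
  have e : logPhiTwoDeriv2 x =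
      π ^ 2 / sinh (π * x) ^ 2 - (1 + 3 * x ^ 4) / (x ^ 2 * (1 + x ^ 2) ^ 2) := by
    unfold logPhiTwoDeriv2
    field_simp
    ring
  rw [e, sub_nonpos, div_le_div_iff₀ (by positivity) (by positivity)]
  calc π ^ 2 * (x ^ 2 * (1 + x ^ 2) ^ 2) = (π * x * (1 + x ^ 2)) ^ 2 := by ring
    _ ≤ sinh (π * x) ^ 2 := pow_le_pow_left₀ (by positivity) hlow 2
    _ ≤ (1 + 3 * x ^ 4) * sinh (π * x) ^ 2 :=
      le_mul_of_one_le_left (sq_nonneg _) (le_add_of_nonneg_right (by positivity))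

theorem concaveOn_log_phiTwo_Ici : ConcaveOn ℝ (Ici 0) fun ξ => log (phiTwo ξ) := by
  have hcont : Continuous fun ξ => log (phiTwo ξ) :=
    continuous_phiTwo.log fun ξ => (phiTwo_pos ξ).ne'
  refine concaveOn_of_hasDerivWithinAt2_nonpos (f' := logPhiTwoDeriv) (f'' := logPhiTwoDeriv2)
    (convex_Ici 0) hcont.continuousOn ?_ ?_ ?_ <;>
    rw [interior_Ici] <;> intro x hx
  · exact (hasDerivAt_log_phiTwo hx).hasDerivWithinAt
  · exact (hasDerivAt_logPhiTwoDeriv hx).hasDerivWithinAt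
  · exact logPhiTwoDeriv2_nonpos hx

/-- `φ₂` is positive and log-concave on `ℝ`. -/
theorem phiTwo_pos_logConcave :
    (∀ ξ : ℝ, 0 < phiTwo ξ) ∧
      ConcaveOn ℝ Set.univ (fun ξ : ℝ => Real.log (phiTwo ξ)) := by
  refine ⟨phiTwo_pos, concaveOn_log_phiTwo_Ici.concaveOn_univ_of_even
    (fun ξ => by rw [phiTwo_neg]) (isMaxOn_univ_iff.2 fun ξ => ?_)⟩
  rw [phiTwo_zero, log_one]
  exact log_nonpos (phiTwo_pos ξ).le (phiTwo_le_one ξ)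
end

section
/- For every b > 0 there exist constants c₁, c₂ > 0 such that for all ξ ∈ ℝ: c₁/(1+ξ²) ≤ ∫_ℝ e^{−b|ξ−t|} / (1 + π²t²) dt ≤ c₂/(1+ξ²). -/
/-!
Peetre's inequality `1 + ξ² ≤ 2 (1 + (ξ - t)²) (1 + t²)` lets the weight `1 / (1 + π² t²)` be
traded for `1 / (1 + ξ²)` at the cost of a factor `1 + (ξ - t)²` on the other convolution factor,
in either direction. Since `e^{-b|u|}` is integrable against `1 + u²` and against `1 / (1 + u²)`,
both bounds follow with constants given by these two integrals.
-/

open MeasureTheory Real Set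

theorem one_add_sq_le_two_mul_one_add_sq_mul (x y : ℝ) :
    1 + x ^ 2 ≤ 2 * ((1 + (x - y) ^ 2) * (1 + y ^ 2)) := by
  nlinarith [sq_nonneg (x - 2 * y), sq_nonneg ((x - y) * y)]

theorem MeasureTheory.Integrable.div_one_add_mul_sq {g : ℝ → ℝ} (hg : Integrable g) {c : ℝ}
    (hc : 0 ≤ c) : Integrable fun t => g t / (1 + c * t ^ 2) := by
  have hw : Continuous fun t : ℝ => 1 + c * t ^ 2 := by fun_prop
  refine hg.mono (hg.aestronglyMeasurable.div₀ hw.aestronglyMeasurable) (ae_of_all _ fun t => ?_)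
  rw [norm_div, Real.norm_of_nonneg (by positivity : 0 ≤ 1 + c * t ^ 2)]
  exact div_le_self (norm_nonneg _) (by nlinarith [mul_nonneg hc (sq_nonneg t)])

theorem MeasureTheory.Integrable.of_one_add_sq_mul {f : ℝ → ℝ}
    (hf : Integrable fun u => (1 + u ^ 2) * f u) : Integrable f := by
  refine (hf.div_one_add_mul_sq zero_le_one).congr (ae_of_all _ fun u => ?_)
  field_simp

theorem integrable_comp_abs_of_integrableOn_Ioi {E : Type*} [NormedAddCommGroup E] {f : ℝ → E}
    (hf : IntegrableOn f (Ioi 0)) : Integrable fun x => f |x| := by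
  have hpos : IntegrableOn (fun x => f |x|) (Ici 0) :=
    (integrableOn_Ici_iff_integrableOn_Ioi (by simp)).mpr <|
      hf.congr_fun (fun x hx => by rw [abs_of_pos hx]) measurableSet_Ioi
  have hneg : IntegrableOn (fun x => f |x|) (Iio 0) :=
    (neg_zero (G := ℝ) ▸ hf).comp_neg_Iio.congr_fun
      (fun x hx => by rw [abs_of_neg hx]) measurableSet_Iio
  have := hneg.union hpos
  rwa [Iio_union_Ici, integrableOn_univ] at this

theorem integrable_one_add_sq_mul_exp_neg_mul_abs {b : ℝ} (hb : 0 < b) :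
    Integrable fun u : ℝ => (1 + u ^ 2) * exp (-b * |u|) := by
  have hIoi : IntegrableOn (fun x : ℝ => (1 + x ^ 2) * exp (-b * x)) (Ioi 0) := by
    refine ((integrableOn_rpow_mul_exp_neg_mul_rpow (s := 0) (by norm_num) one_pos hb).add
      (integrableOn_rpow_mul_exp_neg_mul_rpow (s := 2) (by norm_num) one_pos hb)).congr_fun
      (fun x _ => ?_) measurableSet_Ioi
    simp only [Pi.add_apply, rpow_zero, rpow_one, rpow_two]
    ring
  simpa only [sq_abs] using integrable_comp_abs_of_integrableOn_Ioi hIoi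

section CauchyConvolution

variable {f : ℝ → ℝ} {c : ℝ}

theorem integral_comp_sub_div_one_add_mul_sq_le (hf₀ : ∀ u, 0 ≤ f u)
    (hf : Integrable fun u => (1 + u ^ 2) * f u) (hc : 1 ≤ c) (ξ : ℝ) :
    ∫ t, f (ξ - t) / (1 + c * t ^ 2) ≤ 2 * (∫ u, (1 + u ^ 2) * f u) / (1 + ξ ^ 2) := by
  have hle : ∀ t, f (ξ - t) / (1 + c * t ^ 2)
      ≤ 2 * ((1 + (ξ - t) ^ 2) * f (ξ - t)) / (1 + ξ ^ 2) := fun t => by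
    have hpeetre := one_add_sq_le_two_mul_one_add_sq_mul ξ t
    have hweight : 1 + t ^ 2 ≤ 1 + c * t ^ 2 := by nlinarith [sq_nonneg t]
    have hfξ := hf₀ (ξ - t)
    rw [div_le_div_iff₀ (by positivity) (by positivity)]
    nlinarith [mul_le_mul_of_nonneg_left hweight (by positivity : 0 ≤ 2 * (1 + (ξ - t) ^ 2)),
      mul_nonneg hfξ (sq_nonneg t)]
  calc ∫ t, f (ξ - t) / (1 + c * t ^ 2)
      ≤ ∫ t, 2 * ((1 + (ξ - t) ^ 2) * f (ξ - t)) / (1 + ξ ^ 2) :=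
        integral_mono ((hf.of_one_add_sq_mul.comp_sub_left ξ).div_one_add_mul_sq (by linarith))
          (((hf.comp_sub_left ξ).const_mul 2).div_const _) hle
    _ = 2 * (∫ u, (1 + u ^ 2) * f u) / (1 + ξ ^ 2) := by
        rw [integral_div, integral_const_mul,
          integral_sub_left_eq_self (fun u => (1 + u ^ 2) * f u)]

theorem integral_div_one_add_sq_div_le_integral_comp_sub (hf₀ : ∀ u, 0 ≤ f u)
    (hf : Integrable f) (hc : 1 ≤ c) (ξ : ℝ) :
    (∫ u, f u / (1 + u ^ 2)) / (2 * c) / (1 + ξ ^ 2) ≤ ∫ t, f (ξ - t) / (1 + c * t ^ 2) := by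
  have hf' : Integrable fun u => f u / (1 + u ^ 2) := by
    simpa only [one_mul] using hf.div_one_add_mul_sq zero_le_one
  have hle : ∀ t, f (ξ - t) / (1 + (ξ - t) ^ 2) / (2 * c) / (1 + ξ ^ 2)
      ≤ f (ξ - t) / (1 + c * t ^ 2) := fun t => by
    have hpeetre := one_add_sq_le_two_mul_one_add_sq_mul t ξ
    have hweight : 1 + c * t ^ 2 ≤ c * (1 + t ^ 2) := by linarith
    rw [div_div, div_div]
    refine div_le_div_of_nonneg_left (hf₀ _) (by positivity) ?_
    nlinarith [mul_le_mul_of_nonneg_left hpeetre (by linarith : 0 ≤ c)]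
  calc (∫ u, f u / (1 + u ^ 2)) / (2 * c) / (1 + ξ ^ 2)
      = ∫ t, f (ξ - t) / (1 + (ξ - t) ^ 2) / (2 * c) / (1 + ξ ^ 2) := by
        rw [integral_div, integral_div,
          integral_sub_left_eq_self (fun u => f u / (1 + u ^ 2))]
    _ ≤ ∫ t, f (ξ - t) / (1 + c * t ^ 2) :=
        integral_mono (((hf'.comp_sub_left ξ).div_const _).div_const _)
          ((hf.comp_sub_left ξ).div_one_add_mul_sq (by linarith)) hle

end CauchyConvolution

/-- For every `b > 0` there are `c₁, c₂ > 0` such that for all `ξ ∈ ℝ`,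
`c₁/(1+ξ²) ≤ ∫ e^{−b|ξ−t|}/(1+π²t²) dt ≤ c₂/(1+ξ²)`. -/
theorem cauchy_exp_convolution_equiv (b : ℝ) (hb : 0 < b) :
    ∃ c₁ : ℝ, 0 < c₁ ∧ ∃ c₂ : ℝ, 0 < c₂ ∧ ∀ ξ : ℝ,
      c₁ / (1 + ξ ^ 2) ≤ (∫ t : ℝ, Real.exp (-b * |ξ - t|) / (1 + Real.pi ^ 2 * t ^ 2)) ∧
      (∫ t : ℝ, Real.exp (-b * |ξ - t|) / (1 + Real.pi ^ 2 * t ^ 2)) ≤ c₂ / (1 + ξ ^ 2) := by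
  have hπ : 1 ≤ π ^ 2 := by nlinarith [pi_gt_three]
  have hmoment := integrable_one_add_sq_mul_exp_neg_mul_abs hb
  have hexp := hmoment.of_one_add_sq_mul
  have hexp₀ : ∀ u : ℝ, 0 ≤ exp (-b * |u|) := fun u => (exp_pos _).le
  refine ⟨(∫ u, exp (-b * |u|) / (1 + u ^ 2)) / (2 * π ^ 2), ?_,
    2 * ∫ u, (1 + u ^ 2) * exp (-b * |u|), ?_, fun ξ =>
    ⟨integral_div_one_add_sq_div_le_integral_comp_sub hexp₀ hexp hπ ξ,
      integral_comp_sub_div_one_add_mul_sq_le hexp₀ hmoment hπ ξ⟩⟩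
  · have hweighted : Integrable fun u : ℝ => exp (-b * |u|) / (1 + u ^ 2) := by
      simpa only [one_mul] using hexp.div_one_add_mul_sq zero_le_one
    refine div_pos (integral_pos_of_integrable_nonneg_nonzero (x := 0)
      (Continuous.div (by fun_prop) (by fun_prop) fun u => by positivity) hweighted
      (fun u => by positivity) (by positivity)) (by positivity)
  · exact mul_pos two_pos (integral_pos_of_integrable_nonneg_nonzero (x := 0) (by fun_prop)
      hmoment (fun u => by positivity) (by positivity))
end
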